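/- arXiv:1412.5310 — 12 statements merged into one kernel-verified Lean document; each statement's English description precedes it below -/
import Mathlib

section
/- Let f : A^V → A^V be a coding function, and let u, v be distinct vertices such that the interaction graph G(f) has no loop on u, no loop on v, and no arc from v to u. Then the reduction of f by u followed by v equals the reduction by v followed by u: f^{-uv} = f^{-vu}. -/
/-- Arc `(u,i)` of the interaction graph of a coding function `f`:
the local function `f_i` depends essentially on the coordinate `x_u`. -/
def arcCF {V A : Type*} [DecidableEq V] (f : (V → A) → V → A) (u i : V) : Prop :=
  ∃ (x : V → A) (a : A), f (Function.update x u a) i ≠ f x i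

/-- The `v`-reduction of a coding function: the coordinate `v` becomes the identity
(it is removed), and every other local function `f_i` has `f_v` substituted for `x_v`. -/
def reduceCF {V A : Type*} [DecidableEq V] (f : (V → A) → V → A) (v : V) :
    (V → A) → V → A :=
  fun x i => if i = v then x i else f (Function.update x v (f x v)) i

/-! Away from `u` and `v`, both double reductions evaluate `f_i` at `x` with `x_u` and `x_v`
replaced by substituted values. Since `f_u` does not depend on `x_v`, the value substituted for
`x_u` is `f_u x` in either order, hence so is the one for `x_v`, and the two updates commute. -/

open Function

namespace CodingFunction

variable {V A : Type*} [DecidableEq V] (f : (V → A) → V → A) {u v i : V}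

theorem not_arcCF_iff : ¬ arcCF f u i ↔ ∀ x a, f (update x u a) i = f x i := by
  simp [arcCF]

@[simp]
theorem reduceCF_apply_self (v : V) (x : V → A) :
    reduceCF f v x v = x v := by
  simp [reduceCF]

theorem reduceCF_apply_of_ne (x : V → A) (hiv : i ≠ v) :
    reduceCF f v x i = f (update x v (f x v)) i := by
  simp [reduceCF, hiv]

theorem reduceCF_reduceCF_apply_of_ne (x : V → A)
    (huv : u ≠ v) (hiu : i ≠ u) (hiv : i ≠ v) :
    reduceCF (reduceCF f u) v x i =
      let y := update x v (f (update x u (f x u)) v)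
      f (update y u (f y u)) i := by
  rw [reduceCF_apply_of_ne _ _ hiv, reduceCF_apply_of_ne _ _ hiu,
    reduceCF_apply_of_ne _ _ huv.symm]

end CodingFunction

open CodingFunction

theorem stmt0_general {V A : Type*} [DecidableEq V] (f : (V → A) → V → A) (u v : V)
    (huv : u ≠ v) (hvu : ¬ arcCF f v u) :
    reduceCF (reduceCF f u) v = reduceCF (reduceCF f v) u := by
  have hfu := (not_arcCF_iff f).mp hvu
  funext x i
  rcases eq_or_ne i v with rfl | hiv
  · rw [reduceCF_apply_self, reduceCF_apply_of_ne _ _ huv.symm, reduceCF_apply_self,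
      update_of_ne huv.symm]
  rcases eq_or_ne i u with rfl | hiu
  · rw [reduceCF_apply_self, reduceCF_apply_of_ne _ _ huv, reduceCF_apply_self, update_of_ne huv]
  rw [reduceCF_reduceCF_apply_of_ne f x huv hiu hiv,
    reduceCF_reduceCF_apply_of_ne f x huv.symm hiv hiu]
  simp only [hfu, update_comm huv.symm]

/-- If `G(f)` has no loop on `u`, no loop on `v` and no arc from `v` to `u`,
then `f^{-uv} = f^{-vu}`. -/
theorem stmt0 {V A : Type*} [DecidableEq V] (f : (V → A) → V → A) (u v : V)
    (huv : u ≠ v) (hu : ¬ arcCF f u u) (hv : ¬ arcCF f v v) (hvu : ¬ arcCF f v u) :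
    reduceCF (reduceCF f u) v = reduceCF (reduceCF f v) u :=
  stmt0_general f u v huv hvu
end

section
/- Let I be an acyclic set of a digraph G. Then any enumeration of I is a reduction sequence of G, and the result of iterated single-vertex reductions along this enumeration equals the I-reduction G^{-I}, defined as the digraph on V \ I with arc (u,w) iff (u,w) ∈ G or there is a path in G from u to w all of whose internal vertices lie in I. -/
/-- The `v`-reduction of a digraph. -/
def gReduce {V : Type*} (G : V → V → Prop) (v : V) : V → V → Prop :=
  fun a b => a ≠ v ∧ b ≠ v ∧ (G a b ∨ (G a v ∧ G v b))

/-- There is a path in `G` from `u` to `w` all of whose internal vertices lie in `I`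
(and there is at least one internal vertex). -/
def PathThrough {V : Type*} (G : V → V → Prop) (I : Set V) (u w : V) : Prop :=
  ∃ l : List V, l ≠ [] ∧ l.Nodup ∧ (∀ i ∈ l, i ∈ I) ∧ List.Chain G u (l ++ [w])

/-- The simultaneous `I`-reduction of a digraph: an arc `(u,w)` (with `u,w ∉ I`)
iff `(u,w) ∈ G` or there is a path in `G` from `u` to `w` through `I`. -/
def gReduceSet {V : Type*} (G : V → V → Prop) (I : Set V) : V → V → Prop :=
  fun a b => a ∉ I ∧ b ∉ I ∧ (G a b ∨ PathThrough G I a b)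

/-- `I` is an acyclic set of `G`. -/
def AcyclicIn {V : Type*} (G : V → V → Prop) (I : Set V) : Prop :=
  ∀ a ∈ I, ¬ ∃ l : List V, (∀ i ∈ l, i ∈ I) ∧ List.Chain G a (l ++ [a])

/-- `s` is a reduction sequence of `G`. -/
def IsRedSeqG {V : Type*} (G : V → V → Prop) : List V → Prop
  | [] => True
  | v :: t => ¬ G v v ∧ IsRedSeqG (gReduce G v) t

/-!
Let `W_I(a, b)` mean that there is a walk from `a` to `b` whose internal vertices lie in `I`,
repetitions allowed. Shortcutting repeated vertices shows that `G^{-I}` is `W_I` restricted to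
`V \ I`. For a loopless `v ∈ I`, walks through `I` in `G` and walks through `I \ {v}` in `G^{-v}`
connect the same pairs outside `I`: an arc of `G^{-v}` is a walk of length at most two via `v`,
and conversely the visits of a walk to `v` can be contracted, never being consecutive. Hence
`(G^{-v})^{-(I \ {v})} = G^{-I}`. The same correspondence shows that `I \ {v}` stays acyclic in
`G^{-v}`, so the next vertex of the enumeration is again loopless, and induction along the
enumeration finishes the proof.
-/

section Walks

variable {V : Type*} {G R : V → V → Prop} {I J : Set V} {a b : V}

def WalkThrough (G : V → V → Prop) (I : Set V) (a b : V) : Prop :=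
  ∃ l : List V, (∀ i ∈ l, i ∈ I) ∧ List.IsChain G (a :: (l ++ [b]))

theorem WalkThrough.of_rel (h : G a b) : WalkThrough G I a b :=
  ⟨[], by simp, List.isChain_pair.2 h⟩

theorem WalkThrough.trans {x : V} (h₁ : WalkThrough G I a x) (hx : x ∈ I)
    (h₂ : WalkThrough G I x b) : WalkThrough G I a b := by
  obtain ⟨l₁, hl₁, c₁⟩ := h₁
  obtain ⟨l₂, hl₂, c₂⟩ := h₂
  refine ⟨l₁ ++ x :: l₂, ?_, ?_⟩
  · simp only [List.mem_append, List.mem_cons]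
    rintro i (hi | rfl | hi)
    exacts [hl₁ i hi, hx, hl₂ i hi]
  · simpa only [List.append_assoc, List.cons_append] using List.isChain_cons_split.2 ⟨c₁, c₂⟩

theorem walkThrough_empty : WalkThrough G ∅ a b ↔ G a b := by
  refine ⟨?_, .of_rel⟩
  rintro ⟨_ | ⟨i, l⟩, hl, c⟩
  · exact List.isChain_pair.1 c
  · exact absurd (hl i List.mem_cons_self) (Set.notMem_empty i)

theorem WalkThrough.flatten (hR : ∀ x y, R x y → WalkThrough G I x y) (hJ : J ⊆ I)
    (h : WalkThrough R J a b) : WalkThrough G I a b := by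
  obtain ⟨l, hl, c⟩ := h
  induction l generalizing a with
  | nil => exact hR a b (List.isChain_pair.1 c)
  | cons x l ih =>
    rw [List.cons_append, List.isChain_cons_cons] at c
    have hx : x ∈ J := hl x List.mem_cons_self
    exact (hR a x c.1).trans (hJ hx) (ih (fun i hi => hl i (List.mem_cons_of_mem x hi)) c.2)

theorem WalkThrough.exists_nodup (h : WalkThrough G I a b) :
    ∃ l : List V, l.Nodup ∧ (∀ i ∈ l, i ∈ I) ∧ List.IsChain G (a :: (l ++ [b])) := by
  obtain ⟨l, hl, c⟩ := h
  induction l generalizing a with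
  | nil => exact ⟨[], List.nodup_nil, hl, c⟩
  | cons x l ih =>
    rw [List.cons_append, List.isChain_cons_cons] at c
    obtain ⟨l', hnd, hl', c'⟩ := ih (fun i hi => hl i (List.mem_cons_of_mem x hi)) c.2
    have hx : x ∈ I := hl x List.mem_cons_self
    by_cases hxl' : x ∈ l'
    · -- shortcut the cycle from `x` back to `x`
      obtain ⟨m₁, m₂, rfl⟩ := List.append_of_mem hxl'
      rw [List.append_assoc, List.cons_append, List.isChain_cons_split] at c'
      refine ⟨x :: m₂, hnd.of_append_right, ?_, ?_⟩
      · simp only [List.mem_cons]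
        rintro i (rfl | hi)
        exacts [hx, hl' i (by simp [hi])]
      · rw [List.cons_append, List.isChain_cons_cons]
        exact ⟨c.1, c'.2⟩
    · refine ⟨x :: l', List.nodup_cons.2 ⟨hxl', hnd⟩, ?_, ?_⟩
      · simp only [List.mem_cons]
        rintro i (rfl | hi)
        exacts [hx, hl' i hi]
      · rw [List.cons_append, List.isChain_cons_cons]
        exact ⟨c.1, c'⟩

end Walks

section Reduction

variable {V : Type*} {G R : V → V → Prop} {I : Set V} {a b u v : V}

theorem WalkThrough.exists_rel_left (h : WalkThrough R I a b) : ∃ y, R a y := by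
  obtain ⟨_ | ⟨x, l⟩, -, c⟩ := h
  exacts [⟨b, List.isChain_pair.1 c⟩, ⟨x, (List.isChain_cons_cons.1 c).1⟩]

theorem WalkThrough.exists_rel_right (h : WalkThrough R I a b) : ∃ x, R x b := by
  obtain ⟨l, -, c⟩ := h
  induction l generalizing a with
  | nil => exact ⟨a, List.isChain_pair.1 c⟩
  | cons x l ih => exact ih (List.isChain_cons_cons.1 c).2

theorem WalkThrough.of_gReduce (hv : v ∈ I) (h : gReduce G v a b) : WalkThrough G I a b := by
  obtain ⟨-, -, hab | ⟨hav, hvb⟩⟩ := h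
  exacts [.of_rel hab, (WalkThrough.of_rel hav).trans hv (.of_rel hvb)]

theorem WalkThrough.of_walkThrough_gReduce (hv : v ∈ I)
    (h : WalkThrough (gReduce G v) (I \ {v}) a b) : WalkThrough G I a b :=
  h.flatten (fun _ _ => .of_gReduce hv) Set.sdiff_subset

theorem gReduce_of_rel {y : V} (hu : u ≠ v) (hy : y ≠ v) (hua : u = a ∨ a = v ∧ G u v)
    (h : G a y) : gReduce G v u y := by
  refine ⟨hu, hy, ?_⟩
  rcases hua with rfl | ⟨rfl, huv⟩
  exacts [Or.inl h, Or.inr ⟨huv, h⟩]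

/-- To keep the induction structural, the contracted walk starts at `u`, which is `a` itself
or, when `a = v`, an in-neighbour of `v`. -/
theorem WalkThrough.gReduce (hvv : ¬ G v v) (hb : b ≠ v) (h : WalkThrough G I a b)
    (hu : u ≠ v) (hua : u = a ∨ a = v ∧ G u v) : WalkThrough (gReduce G v) (I \ {v}) u b := by
  obtain ⟨l, hl, c⟩ := h
  induction l generalizing a u with
  | nil => exact .of_rel (gReduce_of_rel hu hb hua (List.isChain_pair.1 c))
  | cons x l ih =>
    rw [List.cons_append, List.isChain_cons_cons] at c
    have hl' : ∀ i ∈ l, i ∈ I := fun i hi => hl i (List.mem_cons_of_mem x hi)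
    by_cases hxv : x = v
    · subst hxv
      rcases hua with rfl | ⟨rfl, -⟩
      · exact ih hu (Or.inr ⟨rfl, c.1⟩) hl' c.2
      · exact absurd c.1 hvv
    · exact (WalkThrough.of_rel (gReduce_of_rel hu hxv hua c.1)).trans
        ⟨hl x List.mem_cons_self, hxv⟩ (ih hxv (Or.inl rfl) hl' c.2)

theorem gReduceSet_iff : gReduceSet G I a b ↔ a ∉ I ∧ b ∉ I ∧ WalkThrough G I a b := by
  refine and_congr_right fun _ => and_congr_right fun _ => ⟨?_, fun h => ?_⟩
  · rintro (h | ⟨l, -, -, hl, c⟩)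
    exacts [.of_rel h, ⟨l, hl, c⟩]
  · obtain ⟨_ | ⟨x, l⟩, hnd, hl, c⟩ := h.exists_nodup
    exacts [Or.inl (List.isChain_pair.1 c), Or.inr ⟨x :: l, List.cons_ne_nil x l, hnd, hl, c⟩]

theorem gReduceSet_empty : gReduceSet G ∅ = G := by
  funext a b
  simp [gReduceSet_iff, walkThrough_empty]

theorem gReduceSet_gReduce (hv : v ∈ I) (hvv : ¬ G v v) :
    gReduceSet (gReduce G v) (I \ {v}) = gReduceSet G I := by
  funext a b
  rw [gReduceSet_iff, gReduceSet_iff, eq_iff_iff]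
  constructor
  · rintro ⟨ha, hb, h⟩
    obtain ⟨_, hav, -⟩ := h.exists_rel_left
    obtain ⟨_, -, hbv, -⟩ := h.exists_rel_right
    exact ⟨fun haI => ha ⟨haI, hav⟩, fun hbI => hb ⟨hbI, hbv⟩, h.of_walkThrough_gReduce hv⟩
  · rintro ⟨ha, hb, h⟩
    exact ⟨fun h' => ha h'.1, fun h' => hb h'.1,
      h.gReduce hvv (ne_of_mem_of_not_mem hv hb).symm (ne_of_mem_of_not_mem hv ha).symm
        (Or.inl rfl)⟩

theorem acyclicIn_iff : AcyclicIn G I ↔ ∀ a ∈ I, ¬ WalkThrough G I a a := Iff.rfl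

theorem AcyclicIn.not_rel_self (hI : AcyclicIn G I) (hv : v ∈ I) : ¬ G v v :=
  fun h => acyclicIn_iff.1 hI v hv (.of_rel h)

theorem AcyclicIn.gReduce (hI : AcyclicIn G I) (hv : v ∈ I) :
    AcyclicIn (gReduce G v) (I \ {v}) :=
  acyclicIn_iff.2 fun a ha h => acyclicIn_iff.1 hI a ha.1 (h.of_walkThrough_gReduce hv)

end Reduction

/-- If `I` is an acyclic set of `G`, then any enumeration `s` of `I` is a reduction
sequence of `G` and the iterated single-vertex reduction along `s` equals the
simultaneous `I`-reduction `G^{-I}`. -/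
theorem stmt3 {V : Type*} (G : V → V → Prop) (I : Set V) (hI : AcyclicIn G I)
    (s : List V) (hnd : s.Nodup) (hs : ∀ v, v ∈ s ↔ v ∈ I) :
    IsRedSeqG G s ∧ List.foldl gReduce G s = gReduceSet G I := by
  induction s generalizing G I with
  | nil =>
    have hI₀ : I = ∅ := Set.eq_empty_of_forall_notMem fun v hv => by simpa using (hs v).2 hv
    exact ⟨trivial, by rw [hI₀, gReduceSet_empty]; rfl⟩
  | cons v t ih =>
    obtain ⟨hvt, hnd⟩ := List.nodup_cons.1 hnd
    have hv : v ∈ I := (hs v).1 List.mem_cons_self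
    have hvv : ¬ G v v := hI.not_rel_self hv
    have ht : ∀ w, w ∈ t ↔ w ∈ I \ {v} := fun w => by
      rw [Set.mem_sdiff, ← hs, List.mem_cons, Set.mem_singleton_iff]
      exact ⟨fun h => ⟨Or.inr h, fun e => hvt (e ▸ h)⟩, fun ⟨h, hne⟩ => h.resolve_left hne⟩
    obtain ⟨hseq, hfold⟩ := ih _ _ (hI.gReduce hv) hnd ht
    exact ⟨⟨hvv, hseq⟩, by rw [List.foldl_cons, hfold, gReduceSet_gReduce hv hvv]⟩
end

section
/- For any digraph G and any acyclic set I of G, the reduced digraph G^{-I} has a loop on every vertex if and only if I is a maximal acyclic set of G. -/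
namespace List

variable {α : Type*} {R : α → α → Prop}

theorem exists_eq_append_cons_append_cons_of_not_nodup {l : List α} (h : ¬l.Nodup) :
    ∃ a l₁ l₂ l₃, l = l₁ ++ a :: l₂ ++ a :: l₃ := by
  obtain ⟨a, ha⟩ : ∃ a, [a, a] <+ l := by simpa [nodup_iff_sublist] using h
  obtain ⟨r₁, r₂, rfl, h₁, h₂⟩ := cons_sublist_iff.1 ha
  obtain ⟨l₁, l₂, rfl⟩ := append_of_mem h₁
  obtain ⟨l₃, l₄, rfl⟩ := append_of_mem (singleton_sublist.1 h₂)
  exact ⟨a, l₁, l₂ ++ l₃, l₄, by simp⟩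

theorem IsChain.bypass {a : α} {l₁ l₂ l₃ : List α}
    (h : IsChain R (l₁ ++ a :: l₂ ++ a :: l₃)) : IsChain R (l₁ ++ a :: l₃) := by
  rw [append_assoc, cons_append, isChain_split, isChain_cons_split] at h
  exact isChain_split.2 ⟨h.1, h.2.2⟩

theorem IsChain.rotate_cycle {a b : α} {l₁ l₂ : List α}
    (h : IsChain R (a :: (l₁ ++ b :: l₂ ++ [a]))) : IsChain R (b :: (l₂ ++ a :: l₁ ++ [b])) := by
  rw [append_assoc, cons_append, isChain_cons_split] at h
  simpa using isChain_cons_split.2 ⟨h.2, h.1⟩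

theorem IsChain.exists_nodup_subset {u w : α} {l : List α} (hne : l ≠ [])
    (h : IsChain R (u :: (l ++ [w]))) :
    ∃ l' ⊆ l, l' ≠ [] ∧ l'.Nodup ∧ IsChain R (u :: (l' ++ [w])) := by
  by_cases hnd : l.Nodup
  · exact ⟨l, Subset.refl l, hne, hnd, h⟩
  obtain ⟨a, l₁, l₂, l₃, rfl⟩ := exists_eq_append_cons_append_cons_of_not_nodup hnd
  have hshort : IsChain R (u :: (l₁ ++ a :: l₃ ++ [w])) := by
    simpa using IsChain.bypass (l₁ := u :: l₁) (l₃ := l₃ ++ [w]) (by simpa using h)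
  obtain ⟨l', hsub, hne', hnd', h'⟩ := hshort.exists_nodup_subset (by simp)
  have hsub' : l₁ ++ a :: l₃ ⊆ l₁ ++ a :: l₂ ++ a :: l₃ := fun x hx => by
    simp only [mem_append, mem_cons] at hx ⊢
    tauto
  exact ⟨l', fun x hx => hsub' (hsub hx), hne', hnd', h'⟩
termination_by l.length
decreasing_by subst_vars; simp

end List

section Reduction

variable {V : Type*} {G : V → V → Prop} {I : Set V}

theorem AcyclicIn.mono {J : Set V} (hJ : AcyclicIn G J) (hIJ : I ⊆ J) : AcyclicIn G I :=
  fun a ha ⟨l, hl, hc⟩ => hJ a (hIJ ha) ⟨l, fun i hi => hIJ (hl i hi), hc⟩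

theorem adj_or_pathThrough_self_of_cycle {v : V} {m : List V} (hm : ∀ i ∈ m, i ∈ insert v I)
    (h : List.IsChain G (v :: (m ++ [v]))) : G v v ∨ PathThrough G I v v := by
  by_cases hvm : v ∈ m
  · obtain ⟨m₁, m₂, rfl⟩ := List.append_of_mem hvm
    rw [List.append_assoc, List.cons_append, List.isChain_cons_split] at h
    exact adj_or_pathThrough_self_of_cycle (fun i hi => hm i (by simp [hi])) h.1
  have hmI : ∀ i ∈ m, i ∈ I := fun i hi =>
    (hm i hi).resolve_left fun hiv => hvm (hiv ▸ hi)
  rcases eq_or_ne m [] with rfl | hne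
  · exact Or.inl (by simpa using h)
  · obtain ⟨l, hsub, hne', hnd, hl⟩ := h.exists_nodup_subset hne
    exact Or.inr ⟨l, hne', hnd, fun i hi => hmI i (hsub hi), hl⟩
termination_by m.length
decreasing_by subst_vars; simp

theorem gReduceSet_self_iff (hI : AcyclicIn G I) {v : V} (hv : v ∉ I) :
    gReduceSet G I v v ↔ ¬AcyclicIn G (insert v I) := by
  simp only [gReduceSet, hv, not_false_eq_true, true_and]
  constructor
  · rintro (hG | ⟨l, -, -, hl, hc⟩) hacyc
    · exact hacyc v (Set.mem_insert v I) ⟨[], by simp, List.isChain_pair.2 hG⟩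
    · exact hacyc v (Set.mem_insert v I) ⟨l, fun i hi => Or.inr (hl i hi), hc⟩
  · intro hcyc
    simp only [AcyclicIn, not_forall, not_not] at hcyc
    obtain ⟨a, ha, l, hl, hc⟩ := hcyc
    rcases ha with rfl | haI
    · exact adj_or_pathThrough_self_of_cycle hl hc
    -- a cycle avoiding `v` would lie in the acyclic set `I`
    have hvl : v ∈ l := by
      by_contra hvl
      exact hI a haI ⟨l, fun i hi => (hl i hi).resolve_left fun hiv => hvl (hiv ▸ hi), hc⟩
    obtain ⟨l₁, l₂, rfl⟩ := List.append_of_mem hvl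
    refine adj_or_pathThrough_self_of_cycle (fun i hi => ?_) (List.IsChain.rotate_cycle hc)
    simp only [List.mem_append, List.mem_cons] at hi
    rcases hi with hi | rfl | hi
    · exact hl i (by simp [hi])
    · exact Or.inr haI
    · exact hl i (by simp [hi])

end Reduction

theorem stmt4_general {V : Type*} (G : V → V → Prop) (I : Set V)
    (hI : AcyclicIn G I) :
    (∀ v ∉ I, gReduceSet G I v v) ↔
      (∀ J : Set V, AcyclicIn G J → I ⊆ J → J = I) := by
  have hdown : ∀ ⦃s t : Set V⦄, AcyclicIn G t → s ⊆ t → AcyclicIn G s :=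
    fun _ _ ht hst => ht.mono hst
  calc (∀ v ∉ I, gReduceSet G I v v)
      ↔ ∀ v ∉ I, ¬AcyclicIn G (insert v I) := forall₂_congr fun v hv => gReduceSet_self_iff hI hv
    _ ↔ Maximal (AcyclicIn G) I := by simp [Set.maximal_iff_forall_insert hdown, hI]
    _ ↔ ∀ J : Set V, AcyclicIn G J → I ⊆ J → J = I := by
      simp only [maximal_iff, hI, true_and, eq_comm]

/-- For an acyclic set `I` of a (finite) digraph `G`, the reduction `G^{-I}` has a
loop on every one of its vertices iff `I` is a maximal acyclic set of `G`. -/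
theorem stmt4 {V : Type*} [Fintype V] (G : V → V → Prop) (I : Set V)
    (hI : AcyclicIn G I) :
    (∀ v ∉ I, gReduceSet G I v v) ↔
      (∀ J : Set V, AcyclicIn G J → I ⊆ J → J = I) :=
  stmt4_general G I hI
end

section
/- For any digraph D with vertex set J and any spanning subgraph H of D, there exist a finite set I disjoint from J and a digraph G on vertex set I ∪ J such that the induced subgraph G[J] equals H and the reduction G^{-I} equals D. -/
/-!
Give every arc `(a, b)` of `D` its own new vertex `v`, joined by the detour `a → v → b`, and keep
`H` on the old vertices. The new vertices span no arcs, so they form an acyclic set and the only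
paths through them are these detours; the reduction therefore adds exactly the arcs of `D` to
`H ⊆ D`.
-/

section NoArcsInside

variable {V : Type*} {G : V → V → Prop} {I : Set V}

theorem acyclicIn_of_forall_not_adj (hI : ∀ x ∈ I, ∀ y ∈ I, ¬ G x y) : AcyclicIn G I := by
  rintro a ha ⟨l, hl, hchain⟩
  cases l with
  | nil => exact hI a ha a ha (List.isChain_pair.1 hchain)
  | cons i l => exact hI a ha i (hl i (by simp)) (List.isChain_cons_cons.1 hchain).1

theorem pathThrough_iff_of_forall_not_adj (hI : ∀ x ∈ I, ∀ y ∈ I, ¬ G x y) {u w : V} :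
    PathThrough G I u w ↔ ∃ i ∈ I, G u i ∧ G i w := by
  constructor
  · rintro ⟨l, hne, -, hl, hchain⟩
    match l, hne, hl, hchain with
    | [i], _, hl, hchain =>
      obtain ⟨hui, hiw⟩ := List.isChain_cons_cons.1 hchain
      exact ⟨i, hl i (by simp), hui, List.isChain_pair.1 hiw⟩
    | i :: j :: _, _, hl, hchain =>
      have hij := (List.isChain_cons_cons.1 (List.isChain_cons_cons.1 hchain).2).1
      exact absurd hij (hI i (hl i (by simp)) j (hl j (by simp)))
  · rintro ⟨i, hi, hui, hiw⟩
    exact ⟨[i], by simp, by simp, by simpa, List.isChain_cons_cons.2 ⟨hui, List.isChain_pair.2 hiw⟩⟩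

end NoArcsInside

def detourGraph {V ι : Type*} (H : V → V → Prop) (f : ι → V × V) : V ⊕ ι → V ⊕ ι → Prop
  | .inl a, .inl b => H a b
  | .inl a, .inr v => (f v).1 = a
  | .inr v, .inl b => (f v).2 = b
  | .inr _, .inr _ => False

section Detour

variable {V ι : Type*} {H : V → V → Prop} {f : ι → V × V}

theorem detourGraph_not_adj_of_isRight :
    ∀ x ∈ {x : V ⊕ ι | x.isRight}, ∀ y ∈ {x : V ⊕ ι | x.isRight}, ¬ detourGraph H f x y := by
  rintro (a | v) hx (b | w) hy <;> simp_all [detourGraph]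

theorem gReduceSet_detourGraph_inl_iff {a b : V} :
    gReduceSet (detourGraph H f) {x | x.isRight} (.inl a) (.inl b) ↔
      H a b ∨ (a, b) ∈ Set.range f := by
  simp [gReduceSet, pathThrough_iff_of_forall_not_adj detourGraph_not_adj_of_isRight, detourGraph,
    Prod.ext_iff]

end Detour

/-- For any (finite) digraph `D` on vertex set `J` and any spanning subgraph `H` of
`D`, there exist a finite set `I` of new vertices (the `Sum.inr` part) and a digraph
`G` on `I ∪ J` such that `I` is acyclic, the induced subgraph `G[J]` equals `H`, and
the reduction `G^{-I}` equals `D`. -/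
theorem stmt6 {J : Type*} [Fintype J] (D H : J → J → Prop)
    (hH : ∀ a b, H a b → D a b) :
    ∃ (ι : Type) (_ : Fintype ι) (G : J ⊕ ι → J ⊕ ι → Prop),
      AcyclicIn G {x : J ⊕ ι | x.isRight = true} ∧
      (∀ a b : J, G (Sum.inl a) (Sum.inl b) ↔ H a b) ∧
      (∀ a b : J, gReduceSet G {x : J ⊕ ι | x.isRight = true}
          (Sum.inl a) (Sum.inl b) ↔ D a b) := by
  obtain ⟨n, f, hf⟩ := (Set.toFinite {p : J × J | D p.1 p.2}).fin_embedding
  refine ⟨Fin n, inferInstance, detourGraph H f,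
    acyclicIn_of_forall_not_adj detourGraph_not_adj_of_isRight, fun _ _ => Iff.rfl, fun a b => ?_⟩
  rw [gReduceSet_detourGraph_inl_iff, hf]
  exact ⟨fun h => h.elim (hH a b) id, Or.inr⟩
end

section
/- If I is an acyclic set of the interaction graph G(f) of a coding function f, then the interaction graph of the reduced coding function f^{-I} is a subgraph of the graph reduction G(f)^{-I}. -/
/-!
Reducing along `v` substitutes `f_v(x)` for `x_v` in every other coordinate, so an arc `(u, i)`
of `reduceCF f v` with `u ≠ v` is either an arc of `G(f)` or the composite of the arcs `(u, v)`
and `(v, i)`, while no arc of the reduced function enters `v` from elsewhere. Reducing along the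
enumeration `s` one vertex at a time, an arc of `f^{-I}` between vertices outside `I` therefore
lifts to a walk of `G(f)` whose internal vertices lie in `I`; shortcutting repeated vertices
turns that walk into an arc or a path through `I`.
-/

open Function List

section
variable {V A : Type*} [DecidableEq V]

theorem arcCF_reduceCF {f : (V → A) → V → A} {v u i : V} (huv : u ≠ v)
    (h : arcCF (reduceCF f v) u i) : i ≠ v ∧ (arcCF f u i ∨ arcCF f u v ∧ arcCF f v i) := by
  obtain ⟨x, a, hx⟩ := h
  have hiv : i ≠ v := by
    rintro rfl
    simp [reduceCF, update_of_ne huv.symm] at hx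
  refine ⟨hiv, ?_⟩
  simp only [reduceCF, if_neg hiv] at hx
  rw [update_comm huv] at hx
  set b := f (update x u a) v
  set y := update x v b
  by_cases hui : f (update y u a) i = f y i
  · have hvi : f y i ≠ f (update x v (f x v)) i := hui ▸ hx
    refine Or.inr ⟨⟨x, a, fun hb => hvi ?_⟩, update x v (f x v), b, ?_⟩
    · simp only [y, b, hb]
    · rwa [update_idem]
  · exact Or.inl ⟨y, a, hui⟩

theorem exists_isChain_of_isChain_reduceCF {f : (V → A) → V → A} {v u i : V} {m : List V}
    (huv : u ≠ v) (h : List.IsChain (arcCF (reduceCF f v)) (u :: (m ++ [i]))) :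
    i ≠ v ∧ ∃ m', m' ⊆ v :: m ∧ List.IsChain (arcCF f) (u :: (m' ++ [i])) := by
  induction m generalizing u with
  | nil =>
    obtain ⟨hiv, hui | ⟨huv', hvi⟩⟩ := arcCF_reduceCF huv (isChain_pair.mp h)
    · exact ⟨hiv, [], by simp, by simpa⟩
    · exact ⟨hiv, [v], by simp, by simp [huv', hvi]⟩
  | cons b t ih =>
    rw [cons_append, isChain_cons_cons] at h
    obtain ⟨hbv, hub | ⟨huv', hvb⟩⟩ := arcCF_reduceCF huv h.1 <;>
      obtain ⟨hiv, m', hm', hch⟩ := ih hbv h.2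
    · refine ⟨hiv, b :: m', ?_, by simpa [hub] using hch⟩
      grind
    · refine ⟨hiv, v :: b :: m', ?_, by simp_all⟩
      grind

theorem exists_isChain_of_arcCF_foldl_reduceCF (s : List V) {f : (V → A) → V → A} {u i : V}
    (hu : u ∉ s) (h : arcCF (s.foldl reduceCF f) u i) :
    ∃ m, m ⊆ s ∧ List.IsChain (arcCF f) (u :: (m ++ [i])) := by
  induction s generalizing f with
  | nil => exact ⟨[], by simp, by simpa⟩
  | cons v t ih =>
    rw [mem_cons, not_or] at hu
    obtain ⟨m, hmt, hch⟩ := ih hu.2 h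
    obtain ⟨-, m', hm', hch'⟩ := exists_isChain_of_isChain_reduceCF hu.1 hch
    exact ⟨m', List.Subset.trans hm' (cons_subset_cons v hmt), hch'⟩

end

theorem rel_or_pathThrough_of_isChain {V : Type*} {G : V → V → Prop} {I : Set V} {u w : V}
    {l : List V} (hl : ∀ j ∈ l, j ∈ I) (h : List.IsChain G (u :: (l ++ [w]))) :
    G u w ∨ PathThrough G I u w := by
  induction l generalizing u with
  | nil => exact Or.inl (isChain_pair.mp h)
  | cons b t ih =>
    rw [cons_append, isChain_cons_cons] at h
    obtain ⟨hub, hbw⟩ := h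
    have hbI : b ∈ I := hl b mem_cons_self
    refine Or.inr ?_
    rcases ih (fun j hj => hl j (mem_cons_of_mem b hj)) hbw with hbw | ⟨p, -, hp, hpI, hch⟩
    · exact ⟨[b], by simp, by simp, by simpa, isChain_cons_cons.mpr ⟨hub, isChain_pair.mpr hbw⟩⟩
    replace hch : List.IsChain G (b :: (p ++ [w])) := hch
    by_cases hbp : b ∈ p
    · obtain ⟨p₁, q, rfl⟩ := append_of_mem hbp
      have hq : List.IsChain G (b :: (q ++ [w])) :=
        (isChain_cons_split.mp (by simpa using hch)).2
      exact ⟨b :: q, by simp, hp.sublist (sublist_append_right _ _),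
        fun j hj => hpI j (mem_append_right _ hj), isChain_cons_cons.mpr ⟨hub, hq⟩⟩
    · exact ⟨b :: p, by simp, nodup_cons.mpr ⟨hbp, hp⟩, by simp_all,
        isChain_cons_cons.mpr ⟨hub, hch⟩⟩

theorem stmt7_general {V A : Type*} [DecidableEq V] (f : (V → A) → V → A) (I : Set V)
    (s : List V) (hs : ∀ v, v ∈ s ↔ v ∈ I) :
    ∀ u i : V, u ∉ I → i ∉ I →
      arcCF (List.foldl reduceCF f s) u i → gReduceSet (arcCF f) I u i := by
  intro u i hu hi h
  obtain ⟨m, hms, hch⟩ :=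
    exists_isChain_of_arcCF_foldl_reduceCF s (fun hus => hu ((hs u).1 hus)) h
  exact ⟨hu, hi, rel_or_pathThrough_of_isChain (fun j hj => (hs j).1 (hms hj)) hch⟩

/-- If `I` is an acyclic set of `G(f)`, then the interaction graph of the reduced
coding function `f^{-I}` (obtained by reducing along any enumeration `s` of `I`)
is a subgraph of the graph reduction `G(f)^{-I}`. -/
theorem stmt7 {V A : Type*} [DecidableEq V] (f : (V → A) → V → A) (I : Set V)
    (hI : AcyclicIn (arcCF f) I) (s : List V) (hnd : s.Nodup)
    (hs : ∀ v, v ∈ s ↔ v ∈ I) :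
    ∀ u i : V, u ∉ I → i ∉ I →
      arcCF (List.foldl reduceCF f s) u i → gReduceSet (arcCF f) I u i :=
  stmt7_general f I s hs
end

section
/- Let f be a coding function and v a vertex with no loop in G(f). Then f and its v-reduction f^{-v} have the same number of fixed points; more precisely, the projection x ↦ x_{-v} is a bijection from Fix(f) to Fix(f^{-v}). -/
/-- Extend a state on `V \ {v}` to a full state by putting the value `c` at `v`. -/
def extV {V A : Type*} [DecidableEq V] (v : V) (y : {i : V // i ≠ v} → A) (c : A) :
    V → A :=
  fun j => if h : j = v then c else y ⟨j, h⟩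

/-!
Without a loop on `v`, the value `f_v(x)` does not depend on `x_v`; write `g(y)` for it when
`x_{-v} = y`. A fixed point `x` of `f` is therefore determined by `y = x_{-v}`, namely
`x = (y, g(y))`, and conversely `(y, g(y))` is a fixed point of `f` as soon as `y` is a fixed
point of the `v`-reduction. So `y ↦ (y, g(y))` inverts the projection.
-/

section

variable {V A : Type*} [DecidableEq V]

theorem apply_update_self_of_not_arcCF {f : (V → A) → V → A} {v : V} (hv : ¬ arcCF f v v)
    (x : V → A) (a : A) : f (Function.update x v a) v = f x v :=
  of_not_not fun h => hv ⟨x, a, h⟩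

@[simp]
theorem extV_apply_self (v : V) (y : {i : V // i ≠ v} → A) (c : A) : extV v y c v = c :=
  dif_pos rfl

@[simp]
theorem extV_apply_val (v : V) (y : {i : V // i ≠ v} → A) (c : A) (i : {i : V // i ≠ v}) :
    extV v y c i.1 = y i :=
  dif_neg i.2

theorem update_extV (v : V) (y : {i : V // i ≠ v} → A) (c c' : A) :
    Function.update (extV v y c) v c' = extV v y c' := by
  funext j
  by_cases h : j = v
  · subst h; simp
  · simp [Function.update, extV, h]

theorem extV_restrict (v : V) (x : V → A) (c : A) :
    extV v (fun i : {i : V // i ≠ v} => x i.1) c = Function.update x v c := by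
  funext j
  by_cases h : j = v
  · subst h; simp
  · simp [Function.update, extV, h]

theorem apply_extV_self_of_not_arcCF {f : (V → A) → V → A} {v : V} (hv : ¬ arcCF f v v)
    (y : {i : V // i ≠ v} → A) (c c' : A) : f (extV v y c) v = f (extV v y c') v := by
  rw [← update_extV v y c' c, apply_update_self_of_not_arcCF hv]

theorem apply_extV_restrict_self_of_not_arcCF {f : (V → A) → V → A} {v : V}
    (hv : ¬ arcCF f v v) {x : V → A} (hx : f x = x) (c : A) :
    f (extV v (fun i : {i : V // i ≠ v} => x i.1) c) v = x v := by
  rw [extV_restrict, apply_update_self_of_not_arcCF hv, hx]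

theorem extV_restrict_apply_self_of_not_arcCF {f : (V → A) → V → A} {v : V}
    (hv : ¬ arcCF f v v) {x : V → A} (hx : f x = x) (c : A) :
    extV v (fun i : {i : V // i ≠ v} => x i.1)
      (f (extV v (fun i : {i : V // i ≠ v} => x i.1) c) v) = x := by
  rw [apply_extV_restrict_self_of_not_arcCF hv hx, extV_restrict, Function.update_eq_self]

end

/-- If `G(f)` has no loop on `v`, then the projection `x ↦ x_{-v}` is a bijection
from the fixed points of `f` onto the fixed points of the `v`-reduction `f^{-v}`,
i.e. onto the states `y` on `V \ {v}` satisfying `f_i(y, f_v(y)) = y_i` for all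
`i ≠ v` (here `f_v(y)` is computed by extending `y` with an arbitrary value `c` at
`v`, which is irrelevant since there is no loop on `v`). -/
theorem stmt9 {V A : Type*} [DecidableEq V] [Nonempty A]
    (f : (V → A) → V → A) (v : V) (hv : ¬ arcCF f v v) :
    Set.BijOn (fun (x : V → A) (i : {i : V // i ≠ v}) => x i.1)
      {x : V → A | f x = x}
      {y : {i : V // i ≠ v} → A |
        ∀ (c : A) (i : {i : V // i ≠ v}),
          f (extV v y (f (extV v y c) v)) i.1 = y i} := by
  obtain ⟨c⟩ := ‹Nonempty A›
  refine Set.InvOn.bijOn (f' := fun y => extV v y (f (extV v y c) v)) ⟨?_, ?_⟩ ?_ ?_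
  · intro x (hx : f x = x)
    exact extV_restrict_apply_self_of_not_arcCF hv hx c
  · intro y _
    funext i
    exact extV_apply_val v y _ i
  · intro x (hx : f x = x) c' i
    dsimp only
    rw [extV_restrict_apply_self_of_not_arcCF hv hx, hx]
  · intro y hy
    dsimp only
    funext j
    by_cases h : j = v
    · rw [h, extV_apply_self, apply_extV_self_of_not_arcCF hv y _ c]
    · exact (hy c ⟨j, h⟩).trans (extV_apply_val v y _ ⟨j, h⟩).symm
end

section
/- If the interaction graph G(f) of a coding function f : A^V → A^V is acyclic, then f has exactly one fixed point. -/
lemma Relation.TransGen.exists_chain {V : Type*} {r : V → V → Prop} {a b : V}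
    (h : Relation.TransGen r a b) : ∃ l : List V, List.IsChain r (a :: (l ++ [b])) := by
  induction h using Relation.TransGen.head_induction_on with
  | single hab => exact ⟨[], .cons_cons hab (.singleton _)⟩
  | head hab _ ih =>
    obtain ⟨l, hl⟩ := ih
    exact ⟨_ :: l, .cons_cons hab hl⟩

lemma AcyclicIn.wellFounded {V : Type*} [Finite V] {G : V → V → Prop}
    (h : AcyclicIn G Set.univ) : WellFounded G := by
  have : Std.Irrefl (Relation.TransGen G) := ⟨fun a ha => by
    obtain ⟨l, hl⟩ := ha.exists_chain
    exact h a (Set.mem_univ a) ⟨l, fun i _ => Set.mem_univ i, hl⟩⟩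
  exact Subrelation.wf Relation.TransGen.single (Finite.wellFounded_of_trans_of_irrefl _)

section Dependence

variable {V A B : Type*} [DecidableEq V]

lemma apply_eq_of_forall_update_eq {g : (V → A) → B} {S : Set V}
    (hg : ∀ u ∉ S, ∀ x a, g (Function.update x u a) = g x) {y : V → A} (D : Finset V) :
    ∀ x : V → A, (∀ u ∉ D, x u = y u) → (∀ u ∈ D, u ∉ S) → g x = g y := by
  induction D using Finset.induction_on with
  | empty => exact fun x hx _ => congrArg g (funext fun u => hx u (Finset.notMem_empty u))
  | insert u D _ ih =>
    intro x hx hS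
    have hS' : ∀ v ∈ D, v ∉ S := fun v hv => hS v (Finset.mem_insert_of_mem hv)
    rw [← hg u (hS u (Finset.mem_insert_self u D)) x (y u)]
    refine ih _ (fun v hv => ?_) hS'
    by_cases hvu : v = u
    · subst hvu; simp
    · rw [Function.update_of_ne hvu]
      exact hx v (by simp [hvu, hv])

lemma apply_eq_of_eqOn [Finite V] {g : (V → A) → B} {S : Set V}
    (hg : ∀ u ∉ S, ∀ x a, g (Function.update x u a) = g x) {x y : V → A}
    (hxy : ∀ u ∈ S, x u = y u) : g x = g y := by
  classical
  have := Fintype.ofFinite V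
  refine apply_eq_of_forall_update_eq hg (Finset.univ.filter fun u => x u ≠ y u) x
    (fun u hu => ?_) (fun u hu huS => ?_)
  · simpa using hu
  · exact (Finset.mem_filter.mp hu).2 (hxy u huS)

lemma apply_eq_of_forall_arcCF [Finite V] (f : (V → A) → V → A) (i : V) {x y : V → A}
    (hxy : ∀ u, arcCF f u i → x u = y u) : f x i = f y i :=
  apply_eq_of_eqOn (g := (f · i)) (S := {u | arcCF f u i})
    (fun _ hu z a => not_not.mp fun hne => hu ⟨z, a, hne⟩) hxy

theorem existsUnique_fixedPoint_of_wellFounded [Finite V] [Nonempty A]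
    (f : (V → A) → V → A) (hwf : WellFounded (arcCF f)) : ∃! x : V → A, f x = x := by
  classical
  let c : A := Classical.arbitrary A
  -- The default `c` is never seen: `f · i` ignores all coordinates but the in-neighbours of `i`.
  let x : V → A := hwf.fix fun i x' => f (fun u => if hu : arcCF f u i then x' u hu else c) i
  have hx (i : V) : x i = f (fun u => if _ : arcCF f u i then x u else c) i := hwf.fix_eq _ i
  have hfix : f x = x := funext fun i => by
    rw [hx i]
    exact apply_eq_of_forall_arcCF f i fun u hu => by simp [hu]
  refine ⟨x, hfix, fun y hy => funext fun i => ?_⟩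
  induction i using hwf.induction with
  | _ i ih =>
    calc y i = f y i := by rw [hy]
      _ = f x i := apply_eq_of_forall_arcCF f i ih
      _ = x i := by rw [hfix]

end Dependence

/-- Robert's theorem: if the interaction graph of a coding function `f` is acyclic,
then `f` has exactly one fixed point. -/
theorem stmt10 {V A : Type*} [Fintype V] [DecidableEq V] [Nonempty A]
    (f : (V → A) → V → A) (h : AcyclicIn (arcCF f) Set.univ) :
    ∃! x : V → A, f x = x :=
  existsUnique_fixedPoint_of_wellFounded f h.wellFounded
end

section
/- Let f : A^V → A^V be a coding function and S a feedback vertex set of G(f). Then the number of fixed points of f is at most |A|^{|S|}. -/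
/-!
Two fixed points `x`, `y` of `f` that agree on `S` differ only on a set `D ⊆ Sᶜ`. For `v ∈ D`,
`f x v = x v ≠ y v = f y v`, and changing `y` into `x` one coordinate at a time shows that some
`u ∈ D` is an in-neighbour of `v` in `G(f)`. A finite nonempty set in which every vertex has an
in-neighbour contains a cycle, which is impossible inside the acyclic set `Sᶜ`; so `D = ∅`, and a
fixed point is determined by its restriction to `S`.
-/

theorem exists_arcCF_of_apply_ne {V A : Type*} [DecidableEq V] (f : (V → A) → V → A)
    (s : Finset V) {x y : V → A} (hxy : ∀ u ∉ s, x u = y u) {i : V} (hi : f x i ≠ f y i) :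
    ∃ u, x u ≠ y u ∧ arcCF f u i := by
  induction s using Finset.induction_on generalizing y with
  | empty => exact absurd (congrFun (congrArg f (funext fun u => hxy u (by simp))) i) hi
  | @insert a s _ ih =>
    set y' := Function.update y a (x a)
    by_cases hx : f x i = f y' i
    · have hy : f y' i ≠ f y i := hx ▸ hi
      have hxa : x a ≠ y a := fun h => hy (by simp only [y', h, Function.update_eq_self])
      exact ⟨a, hxa, y, x a, hy⟩
    · have hxy' : ∀ u ∉ s, x u = y' u := fun u hu => by
        by_cases hua : u = a
        · simp [y', hua]
        · simp [y', hua, hxy u (by simp [hua, hu])]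
      obtain ⟨u, hu, harc⟩ := ih hxy' hx
      have hua : u ≠ a := by rintro rfl; simp [y'] at hu
      exact ⟨u, by simpa [y', hua] using hu, harc⟩

theorem exists_isChain_of_transGen {V : Type*} {G : V → V → Prop} {I : Set V} {a b : V}
    (h : Relation.TransGen (fun u v => G u v ∧ u ∈ I ∧ v ∈ I) a b) :
    ∃ l : List V, (∀ i ∈ l, i ∈ I) ∧ List.IsChain G (a :: (l ++ [b])) := by
  induction h using Relation.TransGen.head_induction_on with
  | single hab => exact ⟨[], by simp, by simpa using hab.1⟩
  | head hac _ ih =>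
    obtain ⟨l, hl, hchain⟩ := ih
    exact ⟨_ :: l, by simpa using ⟨hac.2.2, hl⟩, .cons_cons hac.1 hchain⟩

theorem AcyclicIn.not_transGen_self {V : Type*} {G : V → V → Prop} {I : Set V}
    (hI : AcyclicIn G I) (a : V) :
    ¬ Relation.TransGen (fun u v => G u v ∧ u ∈ I ∧ v ∈ I) a a := by
  intro h
  have ha : a ∈ I := by
    cases h with
    | single h => exact h.2.1
    | tail _ h => exact h.2.2
  exact hI a ha (exists_isChain_of_transGen h)

/-- Acyclicity makes reachability inside `I` a well-founded order; a minimal element of a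
nonempty `D` would have no in-neighbour in `D`. -/
theorem AcyclicIn.eq_empty_of_forall_exists_arc {V : Type*} [Finite V] {G : V → V → Prop}
    {I D : Set V} (hI : AcyclicIn G I) (hDI : D ⊆ I) (hD : ∀ v ∈ D, ∃ u ∈ D, G u v) :
    D = ∅ := by
  let R := Relation.TransGen (fun u v => G u v ∧ u ∈ I ∧ v ∈ I)
  have : Std.Irrefl R := ⟨hI.not_transGen_self⟩
  by_contra hne
  obtain ⟨v, hv, hmin⟩ := (Finite.wellFounded_of_trans_of_irrefl R).has_min D
    (Set.nonempty_iff_ne_empty.2 hne)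
  obtain ⟨u, hu, huv⟩ := hD v hv
  exact hmin u hu (.single ⟨huv, hDI hu, hDI hv⟩)

theorem Function.IsFixedPt.eq_of_eqOn_of_acyclicIn_compl {V A : Type*} [Finite V]
    [DecidableEq V] {f : (V → A) → V → A} {S : Set V} (hS : AcyclicIn (arcCF f) Sᶜ)
    {x y : V → A} (hx : IsFixedPt f x) (hy : IsFixedPt f y) (hxy : S.EqOn x y) : x = y := by
  have := Fintype.ofFinite V
  have hD := hS.eq_empty_of_forall_exists_arc (D := {v | x v ≠ y v})
    (fun v hv hvS => hv (hxy hvS)) fun v hv => by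
      refine exists_arcCF_of_apply_ne f Finset.univ (by simp) ?_
      rwa [hx, hy]
  funext v
  by_contra h
  exact hD.subset h

/-- Aracena's bound: if `S` is a feedback vertex set of `G(f)` (its complement is an
acyclic set), then `f` has at most `|A|^{|S|}` fixed points. -/
theorem stmt11 {V A : Type*} [Fintype V] [DecidableEq V] [Fintype A]
    (f : (V → A) → V → A) (S : Finset V)
    (hS : AcyclicIn (arcCF f) ((S : Set V))ᶜ) :
    Set.ncard {x : V → A | f x = x} ≤ Fintype.card A ^ S.card := by
  have hinj : Set.InjOn (fun x (v : S) => x v) {x : V → A | f x = x} :=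
    fun x hx y hy hxy => Function.IsFixedPt.eq_of_eqOn_of_acyclicIn_compl hS hx hy
      fun v hv => congrFun hxy ⟨v, hv⟩
  calc Set.ncard {x : V → A | f x = x} ≤ (Set.univ : Set (S → A)).ncard :=
        Set.ncard_le_ncard_of_injOn _ (fun _ _ => Set.mem_univ _) hinj
    _ = Fintype.card A ^ S.card := by
        rw [Set.ncard_univ, Nat.card_eq_fintype_card, Fintype.card_fun, Fintype.card_coe]
end

section
/- For every digraph G and every q ≥ 3: g(G,q) ≥ h(G,q) ≥ g(G,q−1)·log_q(q−1) ≥ g(G,q) − n·log_q(1 + 1/(q−1)), where n is the number of vertices of G. -/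
/-- Maximum number of fixed points of a coding function over an alphabet of size `q`
whose interaction graph is a subgraph of `G`; `g(G,q)` is its `log_q`. -/
noncomputable def maxFixSub {V : Type*} [Fintype V] [DecidableEq V]
    (G : V → V → Prop) (q : ℕ) : ℕ :=
  sSup {n : ℕ | ∃ f : (V → Fin q) → V → Fin q,
    (∀ u i, arcCF f u i → G u i) ∧ n = Set.ncard {x | f x = x}}

/-- Maximum number of fixed points of a coding function over an alphabet of size `q`
whose interaction graph is exactly `G`; `h(G,q)` is its `log_q`. -/
noncomputable def maxFixEq {V : Type*} [Fintype V] [DecidableEq V]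
    (G : V → V → Prop) (q : ℕ) : ℕ :=
  sSup {n : ℕ | ∃ f : (V → Fin q) → V → Fin q,
    (∀ u i, arcCF f u i ↔ G u i) ∧ n = Set.ncard {x | f x = x}}

open Function Finset

section CodingFunction

variable {V α β : Type*}

lemma apply_update_eq_of_not_arcCF [DecidableEq V] {f : (V → α) → V → α} {u i : V}
    (h : ¬ arcCF f u i) (x : V → α) (a : α) : f (update x u a) i = f x i :=
  not_not.mp fun hne => h ⟨x, a, hne⟩

lemma not_arcCF_const [DecidableEq V] (b : V → α) (u i : V) : ¬ arcCF (fun _ => b) u i :=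
  fun ⟨_, _, h⟩ => h rfl

noncomputable def restrictCF [Nonempty β] (f : (V → α) → V → α) (e : V → β → α) :
    (V → β) → V → β :=
  fun y i => invFun (e i) (f (fun v => e v (y v)) i)

lemma arcCF_of_arcCF_restrictCF [DecidableEq V] [Nonempty β] {f : (V → α) → V → α}
    {e : V → β → α} {u i : V} (h : arcCF (restrictCF f e) u i) : arcCF f u i := by
  obtain ⟨y, b, hne⟩ := h
  refine ⟨fun v => e v (y v), e u b, fun heq => hne ?_⟩
  simp only [restrictCF, apply_update e y u b]
  exact congrArg _ (by convert heq)

lemma ncard_fix_le_ncard_fix_restrictCF [Nonempty β] [Finite V] [Finite β]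
    {f : (V → α) → V → α} {e : V → β → α} (he : ∀ v, Injective (e v)) :
    Set.ncard {x | f x = x ∧ ∀ v, x v ∈ Set.range (e v)} ≤
      Set.ncard {y | restrictCF f e y = y} := by
  refine (Set.ncard_le_ncard ?_).trans (Set.ncard_image_le (f := fun y v => e v (y v)))
  rintro x ⟨hfx, hx⟩
  choose y hy using hx
  obtain rfl : (fun v => e v (y v)) = x := funext hy
  refine ⟨y, funext fun i => ?_, rfl⟩
  simp only [restrictCF, hfx]
  exact leftInverse_invFun (he i) (y i)

open Classical in
noncomputable def extendCF [Nonempty α] (G : V → V → Prop) (f : (V → α) → V → α) (e : α → β)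
    (star : β) : (V → β) → V → β :=
  fun x i => if ∃ u, G u i ∧ x u = star then star else e (f (fun v => invFun e (x v)) i)

lemma arcCF_extendCF_iff [DecidableEq V] [Nonempty α] {G : V → V → Prop}
    {f : (V → α) → V → α} {e : α → β} {star : β} (hf : ∀ u i, arcCF f u i → G u i)
    (hstar : ∀ a, e a ≠ star) (u i : V) :
    arcCF (extendCF G f e star) u i ↔ G u i := by
  classical
  constructor
  · rintro ⟨x, a, hne⟩
    by_contra hG
    have hcond : (∃ w, G w i ∧ update x u a w = star) ↔ ∃ w, G w i ∧ x w = star :=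
      exists_congr fun w => and_congr_right fun hw => by
        rw [update_of_ne fun h : w = u => hG (h ▸ hw)]
    have hval : f (fun v => invFun e (update x u a v)) i = f (fun v => invFun e (x v)) i := by
      rw [funext (apply_update (fun _ => invFun e) x u a)]
      exact apply_update_eq_of_not_arcCF (mt (hf u i) hG) _ _
    exact hne (by simp only [extendCF, hval]; exact if_congr hcond rfl rfl)
  · intro hG
    obtain ⟨a⟩ := ‹Nonempty α›
    have hupd : ∃ w, G w i ∧ update (fun _ => e a) u star w = star := ⟨u, hG, update_self ..⟩
    have hconst : ¬ ∃ w, G w i ∧ e a = star := fun ⟨_, _, h⟩ => hstar a h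
    refine ⟨fun _ => e a, star, ?_⟩
    simp only [extendCF, if_pos hupd, if_neg hconst]
    exact (hstar _).symm

lemma ncard_fix_le_ncard_fix_extendCF [Nonempty α] [Finite V] [Finite β] {G : V → V → Prop}
    {f : (V → α) → V → α} {e : α → β} {star : β} (he : Injective e) (hstar : ∀ a, e a ≠ star) :
    Set.ncard {y | f y = y} ≤ Set.ncard {x | extendCF G f e star x = x} := by
  refine Set.ncard_le_ncard_of_injOn (fun y v => e (y v))
    (fun y (hy : f y = y) => funext fun i => ?_) fun y _ y' _ h => funext fun v => he (congrFun h v)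
  have hconst : ¬ ∃ w, G w i ∧ e (y w) = star := fun ⟨w, _, h⟩ => hstar (y w) h
  simp only [extendCF, if_neg hconst, leftInverse_invFun he _, hy]

end CodingFunction

section Averaging

variable {V α : Type*} [Fintype V] [DecidableEq V] [Fintype α] [DecidableEq α]

lemma sum_card_filter_forall_ne (F : Finset (V → α)) :
    ∑ c : V → α, #{x ∈ F | ∀ v, x v ≠ c v} = #F * (Fintype.card α - 1) ^ Fintype.card V := by
  calc ∑ c : V → α, #{x ∈ F | ∀ v, x v ≠ c v}
      = ∑ x ∈ F, #{c : V → α | ∀ v, x v ≠ c v} := by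
        simp only [card_filter]
        exact sum_comm
    _ = ∑ _x ∈ F, (Fintype.card α - 1) ^ Fintype.card V := by
        refine sum_congr rfl fun x _ => ?_
        have hpi : ({c : V → α | ∀ v, x v ≠ c v} : Finset _) =
            Fintype.piFinset fun v => univ.erase (x v) := by
          ext c
          simp [Fintype.mem_piFinset, ne_comm]
        rw [hpi, Fintype.card_piFinset]
        simp [card_erase_of_mem]
    _ = #F * (Fintype.card α - 1) ^ Fintype.card V := by rw [sum_const, smul_eq_mul]

lemma exists_card_mul_pow_le_card_filter_forall_ne [Nonempty α] (F : Finset (V → α)) :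
    ∃ c : V → α, #F * (Fintype.card α - 1) ^ Fintype.card V ≤
      #{x ∈ F | ∀ v, x v ≠ c v} * Fintype.card α ^ Fintype.card V := by
  obtain ⟨c, -, hc⟩ := exists_le_of_sum_le (s := univ) univ_nonempty
    (f := fun _ => #F * (Fintype.card α - 1) ^ Fintype.card V)
    (g := fun c : V → α => #{x ∈ F | ∀ v, x v ≠ c v} * Fintype.card α ^ Fintype.card V) (by
      rw [sum_const, card_univ, Fintype.card_fun, ← sum_mul, sum_card_filter_forall_ne,
        smul_eq_mul, mul_comm])
  exact ⟨c, hc⟩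

end Averaging

lemma bddAbove_ncard_fix {V : Type*} [Finite V] (q : ℕ)
    (P : ((V → Fin q) → V → Fin q) → Prop) :
    BddAbove {n : ℕ | ∃ f, P f ∧ n = Set.ncard {x | f x = x}} :=
  ⟨Nat.card (V → Fin q), by rintro n ⟨f, -, rfl⟩; exact Set.ncard_le_card _⟩

section MaxFix

variable {V : Type*} [Fintype V] [DecidableEq V]

lemma ncard_fix_le_maxFixSub {G : V → V → Prop} {q : ℕ} {f : (V → Fin q) → V → Fin q}
    (hf : ∀ u i, arcCF f u i → G u i) : Set.ncard {x | f x = x} ≤ maxFixSub G q :=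
  le_csSup (bddAbove_ncard_fix q _) ⟨f, hf, rfl⟩

lemma ncard_fix_le_maxFixEq {G : V → V → Prop} {q : ℕ} {f : (V → Fin q) → V → Fin q}
    (hf : ∀ u i, arcCF f u i ↔ G u i) : Set.ncard {x | f x = x} ≤ maxFixEq G q :=
  le_csSup (bddAbove_ncard_fix q _) ⟨f, hf, rfl⟩

lemma exists_maxFixSub_eq (G : V → V → Prop) (q : ℕ) [NeZero q] :
    ∃ f : (V → Fin q) → V → Fin q,
      (∀ u i, arcCF f u i → G u i) ∧ Set.ncard {x | f x = x} = maxFixSub G q := by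
  have hne : Set.Nonempty {n : ℕ | ∃ f : (V → Fin q) → V → Fin q,
      (∀ u i, arcCF f u i → G u i) ∧ n = Set.ncard {x | f x = x}} :=
    ⟨_, fun _ _ => 0, fun u i h => (not_arcCF_const _ u i h).elim, rfl⟩
  obtain ⟨f, hf, hmax⟩ := Nat.sSup_mem hne (bddAbove_ncard_fix q _)
  exact ⟨f, hf, hmax.symm⟩

lemma one_le_maxFixSub (G : V → V → Prop) (q : ℕ) [NeZero q] : 1 ≤ maxFixSub G q := by
  have hfix : Set.ncard {x : V → Fin q | (fun _ => 0) = x} = 1 :=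
    Set.ncard_eq_one.mpr ⟨fun _ => 0, by ext; simp [eq_comm]⟩
  exact hfix ▸ ncard_fix_le_maxFixSub fun u i h => (not_arcCF_const _ u i h).elim

lemma maxFixEq_le_maxFixSub (G : V → V → Prop) (q : ℕ) : maxFixEq G q ≤ maxFixSub G q :=
  csSup_le_csSup' (bddAbove_ncard_fix q _) fun _ ⟨f, hf, hn⟩ => ⟨f, fun u i => (hf u i).1, hn⟩

lemma maxFixSub_le_maxFixEq_succ (G : V → V → Prop) (p : ℕ) [NeZero p] :
    maxFixSub G p ≤ maxFixEq G (p + 1) := by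
  obtain ⟨f, hfG, hf⟩ := exists_maxFixSub_eq G p
  calc maxFixSub G p = Set.ncard {x | f x = x} := hf.symm
    _ ≤ Set.ncard {x | extendCF G f Fin.castSucc (Fin.last p) x = x} :=
      ncard_fix_le_ncard_fix_extendCF (Fin.castSucc_injective p) Fin.castSucc_ne_last
    _ ≤ maxFixEq G (p + 1) := ncard_fix_le_maxFixEq (arcCF_extendCF_iff hfG Fin.castSucc_ne_last)

lemma maxFixSub_succ_mul_pow_le (G : V → V → Prop) (p : ℕ) [NeZero p] :
    maxFixSub G (p + 1) * p ^ Fintype.card V ≤ maxFixSub G p * (p + 1) ^ Fintype.card V := by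
  obtain ⟨f, hfG, hf⟩ := exists_maxFixSub_eq G (p + 1)
  obtain ⟨c, hc⟩ := exists_card_mul_pow_le_card_filter_forall_ne {x | f x = x}
  simp only [Fintype.card_fin, add_tsub_cancel_right] at hc
  have hF : #{x | f x = x} = maxFixSub G (p + 1) := by
    rw [← hf, ← Set.ncard_coe_finset]
    simp
  have hrestrict : #{x ∈ {x | f x = x} | ∀ v, x v ≠ c v} ≤ maxFixSub G p :=
    calc #{x ∈ {x | f x = x} | ∀ v, x v ≠ c v}
        = Set.ncard {x | f x = x ∧ ∀ v, x v ∈ Set.range (c v).succAbove} := by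
          rw [← Set.ncard_coe_finset]
          simp [Fin.range_succAbove]
      _ ≤ Set.ncard {y | restrictCF f (fun v => (c v).succAbove) y = y} :=
          ncard_fix_le_ncard_fix_restrictCF fun v => Fin.succAbove_right_injective
      _ ≤ maxFixSub G p :=
          ncard_fix_le_maxFixSub fun u i h => hfG u i (arcCF_of_arcCF_restrictCF h)
  rw [← hF]
  exact hc.trans (Nat.mul_le_mul_right _ hrestrict)

end MaxFix

lemma logb_sub_mul_logb_one_add_inv_le {p a b : ℝ} (n : ℕ) (hp : 0 < p) (ha : 0 < a)
    (h : a * p ^ n ≤ b * (p + 1) ^ n) :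
    Real.logb (p + 1) a - n * Real.logb (p + 1) (1 + 1 / p) ≤ Real.logb (p + 1) b := by
  have hQ : 1 < p + 1 := by linarith
  have hb : 0 < b := pos_of_mul_pos_left ((by positivity : 0 < a * p ^ n).trans_le h)
    (by positivity)
  have hlog := Real.logb_le_logb_of_le hQ (by positivity) h
  rw [Real.logb_mul ha.ne' (by positivity), Real.logb_mul hb.ne' (by positivity),
    Real.logb_pow, Real.logb_pow, Real.logb_self_eq_one hQ] at hlog
  rw [one_add_div hp.ne', add_comm p 1, Real.logb_div (by positivity) hp.ne', add_comm 1 p,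
    Real.logb_self_eq_one hQ]
  linarith

/-- For every digraph `G` on `n` vertices and every `q ≥ 3`:
`g(G,q) ≥ h(G,q) ≥ g(G,q−1)·log_q(q−1) ≥ g(G,q) − n·log_q(1 + 1/(q−1))`. -/
theorem stmt13 {V : Type*} [Fintype V] [DecidableEq V] (G : V → V → Prop)
    (q : ℕ) (hq : 3 ≤ q) :
    Real.logb q (maxFixSub G q) ≥ Real.logb q (maxFixEq G q) ∧
    Real.logb q (maxFixEq G q) ≥
      Real.logb ((q : ℝ) - 1) (maxFixSub G (q - 1)) * Real.logb q ((q : ℝ) - 1) ∧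
    Real.logb ((q : ℝ) - 1) (maxFixSub G (q - 1)) * Real.logb q ((q : ℝ) - 1) ≥
      Real.logb q (maxFixSub G q) -
        (Fintype.card V : ℝ) * Real.logb q (1 + 1 / ((q : ℝ) - 1)) := by
  obtain ⟨p, rfl⟩ : ∃ p, q = p + 1 := ⟨q - 1, by omega⟩
  have : NeZero p := ⟨by omega⟩
  have hp : (1 : ℝ) < p := by exact_mod_cast (by omega : 1 < p)
  simp only [add_tsub_cancel_right, Nat.cast_add, Nat.cast_one]
  have hb : (0 : ℝ) < maxFixSub G p := by exact_mod_cast one_le_maxFixSub G p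
  have ha : (0 : ℝ) < maxFixSub G (p + 1) := by exact_mod_cast one_le_maxFixSub G (p + 1)
  have hbe : (maxFixSub G p : ℝ) ≤ maxFixEq G (p + 1) := by
    exact_mod_cast maxFixSub_le_maxFixEq_succ G p
  have hea : (maxFixEq G (p + 1) : ℝ) ≤ maxFixSub G (p + 1) := by
    exact_mod_cast maxFixEq_le_maxFixSub G (p + 1)
  have hcount : (maxFixSub G (p + 1) : ℝ) * p ^ Fintype.card V ≤
      maxFixSub G p * (p + 1) ^ Fintype.card V := by
    exact_mod_cast maxFixSub_succ_mul_pow_le G p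
  have hchange : Real.logb p (maxFixSub G p) * Real.logb (p + 1) p =
      Real.logb (p + 1) (maxFixSub G p) := by
    rw [mul_comm]
    exact Real.mul_logb (by positivity) hp.ne' (by linarith)
  have hQ : (1 : ℝ) < p + 1 := by linarith
  rw [hchange]
  exact ⟨Real.logb_le_logb_of_le hQ (hb.trans_le hbe) hea, Real.logb_le_logb_of_le hQ hb hbe,
    logb_sub_mul_logb_one_add_inv_le _ (by linarith) ha hcount⟩
end

section
/- Let G be a loopless digraph on n vertices, let G° be G with a loop added on every vertex, and let I_k(G) denote the number of in-dominating sets of G of size k. Then for every q ≥ 2, the maximum number of fixed points over all coding functions f over an alphabet of size q with interaction graph exactly G° equals Σ_{k=0}^{n} (q−1)^k · I_k(G); that is, h(G°,q) = log_q Σ_k (q−1)^k I_k(G). -/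
/-- `X` is an in-dominating set of the loopless digraph `G`: every vertex `v` with
positive in-degree is in `X` or has an in-neighbour in `X`. -/
def IsIDS {V : Type*} (G : V → V → Prop) (X : Finset V) : Prop :=
  ∀ v : V, (∃ u, G u v) → v ∈ X ∨ ∃ u ∈ X, G u v

/-!
If `f` has interaction graph `G°`, every vertex `v` with an in-neighbour has a configuration `p v`
with `f (p v) v ≠ p v v`; since `f · v` only reads `v` and its in-neighbours, every fixed point
differs from `p v` somewhere on that window. Moving all these forbidden patterns to `0`, one
coordinate at a time, never decreases the number of configurations avoiding them, and a
configuration avoids the all-zero patterns exactly when its support is in-dominating. Counting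
configurations by their support gives the bound `∑ k, (q - 1) ^ k * I_k(G)`, which is attained
by the network that turns `x v` into `1` when `v` has an in-neighbour and `x` vanishes on `v` and
all of them.
-/

open Finset Function

section Counting

variable {V A : Type*} [Fintype V] [DecidableEq A] [Zero A]

def supportFinset (x : V → A) : Finset V := {u | x u ≠ 0}

@[simp]
theorem mem_supportFinset {x : V → A} {u : V} : u ∈ supportFinset x ↔ x u ≠ 0 := by
  simp [supportFinset]

variable [DecidableEq V] [Fintype A]

theorem card_filter_supportFinset_eq (X : Finset V) :
    #{x : V → A | supportFinset x = X} = (Fintype.card A - 1) ^ #X := by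
  have hpi : ({x : V → A | supportFinset x = X} : Finset _) =
      Fintype.piFinset fun u => if u ∈ X then ({0}ᶜ : Finset A) else {0} := by
    ext x
    simp only [mem_filter, mem_univ, true_and, Fintype.mem_piFinset, Finset.ext_iff,
      mem_supportFinset]
    refine forall_congr' fun u => ?_
    split_ifs with hu <;> simp [hu]
  rw [hpi, Fintype.card_piFinset]
  simp [apply_ite, prod_ite_mem, card_compl]

theorem ncard_setOf_isIDS_supportFinset (G : V → V → Prop) :
    {x : V → A | IsIDS G (supportFinset x)}.ncard =
      ∑ k ∈ range (Fintype.card V + 1),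
        (Fintype.card A - 1) ^ k * {X : Finset V | IsIDS G X ∧ X.card = k}.ncard := by
  classical
  simp only [Set.ncard_eq_toFinset_card', Set.toFinset_ofPred]
  have hmaps : Set.MapsTo supportFinset
      (({x : V → A | IsIDS G (supportFinset x)} : Finset _) : Set (V → A))
      (({X | IsIDS G X} : Finset (Finset V)) : Set (Finset V)) := by
    intro x hx
    simpa using hx
  have hfiber : ∀ X ∈ ({X | IsIDS G X} : Finset (Finset V)),
      #{x ∈ ({x : V → A | IsIDS G (supportFinset x)} : Finset _) | supportFinset x = X} =
        (Fintype.card A - 1) ^ #X := by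
    intro X hX
    rw [← card_filter_supportFinset_eq, filter_filter]
    congr 1
    refine filter_congr fun x _ => ⟨And.right, fun h => ⟨h ▸ (mem_filter.1 hX).2, h⟩⟩
  have hcard : ((({X | IsIDS G X} : Finset (Finset V)) : Set (Finset V))).MapsTo card
      (range (Fintype.card V + 1)) :=
    fun X _ => mem_range.2 (Nat.lt_succ_of_le (card_le_univ X))
  rw [card_eq_sum_card_fiberwise hmaps, sum_congr rfl hfiber,
    ← sum_fiberwise_of_maps_to hcard]
  refine sum_congr rfl fun k _ => ?_
  rw [filter_filter, sum_congr rfl fun X hX => by rw [(mem_filter.1 hX).2.2], sum_const,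
    smul_eq_mul, mul_comm]

end Counting

section Locality

variable {V A : Type*} [DecidableEq V]

theorem not_arcCF_iff {f : (V → A) → V → A} {u v : V} :
    ¬ arcCF f u v ↔ ∀ x a, f (update x u a) v = f x v := by
  simp [arcCF]

theorem apply_eq_of_eqOn_of_not_arcCF [Finite V] {f : (V → A) → V → A} {v : V} {T : Set V}
    (hT : ∀ u ∉ T, ¬ arcCF f u v) {x y : V → A} (hxy : Set.EqOn x y T) : f x v = f y v := by
  classical
  have : Fintype V := Fintype.ofFinite V
  suffices key : ∀ s : Finset V, (∀ u ∈ s, u ∉ T) →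
      ∀ x : V → A, (∀ u ∉ s, x u = y u) → f x v = f y v from
    key {u | x u ≠ y u} (fun u hu huT => (mem_filter.1 hu).2 (hxy huT)) x (by simp)
  intro s
  induction s using Finset.induction_on with
  | empty => exact fun _ x hx => by rw [funext fun u => hx u (notMem_empty u)]
  | insert a s ha ih =>
    intro hs x hx
    rw [← not_arcCF_iff.1 (hT a (hs a (mem_insert_self a s))) x (y a)]
    refine ih (fun u hu => hs u (mem_insert_of_mem hu)) _ fun u hu => ?_
    rcases eq_or_ne u a with rfl | hua
    · exact update_self ..
    · rw [update_of_ne hua, hx u (by simp [hua, hu])]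

theorem eq_of_arcCF_of_forall_apply_eq_self {f : (V → A) → V → A} {u v : V}
    (hf : ∀ x, f x v = x v) (huv : arcCF f u v) : u = v := by
  by_contra hne
  obtain ⟨x, a, h⟩ := huv
  exact h (by rw [hf, hf, update_of_ne (Ne.symm hne)])

end Locality

section Patterns

variable {ι V A : Type*}

def AvoidsPatterns (T : ι → Set V) (p : ι → V → A) (x : V → A) : Prop :=
  ∀ i, ∃ u ∈ T i, x u ≠ p i u

theorem exists_fixed_avoidsPatterns [DecidableEq V] [Finite V] (f : (V → A) → V → A)
    (P : Set V) (hP : ∀ v ∈ P, ∃ x, f x v ≠ x v) :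
    ∃ p : P → V → A, ∀ x, f x = x →
      AvoidsPatterns (fun v : P => insert (v : V) {u | arcCF f u v}) p x := by
  choose p hp using hP
  refine ⟨fun v => p v v.2, fun x hx v => ?_⟩
  by_contra! hxp
  have hfx : f x v = f (p v v.2) v :=
    apply_eq_of_eqOn_of_not_arcCF (fun u hu harc => hu (Or.inr harc)) hxp
  exact hp v v.2 (by rw [← hfx, hx, hxp _ (Set.mem_insert _ _)])

end Patterns

section Compression

variable {ι V A : Type*} [DecidableEq V] [DecidableEq A] [Finite A]

theorem ncard_avoidsPatterns_le_update [Finite V] (T : ι → Set V) (p : ι → V → A) (w : V)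
    (a₀ : A) :
    {x | AvoidsPatterns T p x}.ncard ≤
      {x | AvoidsPatterns T (fun i => update (p i) w a₀) x}.ncard := by
  classical
  let AgreesOff : (V → A) → ι → Prop := fun x i =>
    w ∈ T i ∧ ∀ u ∈ T i, u ≠ w → x u = p i u
  -- `d x` is a value of `x w` forbidden by a pattern that `x` matches off `w`, if there is one.
  -- Swapping `a₀` and `d x` at `w` is injective and moves every allowed value of `x w` away
  -- from `a₀`, the only value forbidden after the update.
  let d : (V → A) → A := fun x => if h : ∃ i, AgreesOff x i then p h.choose w else a₀
  have hd : ∀ x b, d (update x w b) = d x := by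
    intro x b
    have : AgreesOff (update x w b) = AgreesOff x := by
      ext i
      exact and_congr_right fun _ => forall₂_congr fun u _ => imp_congr_right fun huw => by
        rw [update_of_ne huw]
    simp only [d, this]
  have hdx : ∀ x, AvoidsPatterns T p x → ∀ i, AgreesOff x i → x w ≠ d x := by
    intro x hx i hi
    have h : ∃ i, AgreesOff x i := ⟨i, hi⟩
    obtain ⟨u, hu, hne⟩ := hx h.choose
    obtain rfl : u = w := by
      by_contra huw
      exact hne (h.choose_spec.2 u hu huw)
    simpa [d, h] using hne
  refine Set.ncard_le_ncard_of_injOn (fun x => update x w (Equiv.swap a₀ (d x) (x w)))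
    ?_ ?_ (Set.toFinite _)
  · intro x hx i
    by_cases hoff : ∃ u ∈ T i, u ≠ w ∧ x u ≠ p i u
    · obtain ⟨u, hu, huw, hne⟩ := hoff
      exact ⟨u, hu, by simpa [huw] using hne⟩
    · push Not at hoff
      have hmatch : AgreesOff x i := by
        obtain ⟨u, hu, hne⟩ := hx i
        obtain rfl : u = w := by
          by_contra huw
          exact hne (hoff u hu huw)
        exact ⟨hu, hoff⟩
      refine ⟨w, hmatch.1, ?_⟩
      simpa [Equiv.swap_apply_eq_iff] using hdx x hx i hmatch
  · intro x _ y _ hxy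
    have hdxy : d x = d y := by simpa [hd] using congrArg d hxy
    ext u
    rcases eq_or_ne u w with rfl | huw
    · simpa [hdxy] using congrFun hxy u
    · simpa [huw] using congrFun hxy u

theorem ncard_avoidsPatterns_le_const [Fintype V] (T : ι → Set V) (p : ι → V → A)
    (a₀ : A) :
    {x | AvoidsPatterns T p x}.ncard ≤ {x | AvoidsPatterns T (fun _ _ => a₀) x}.ncard := by
  suffices h : ∀ s : Finset V, {x | AvoidsPatterns T p x}.ncard ≤
      {x | AvoidsPatterns T (fun i => s.piecewise (fun _ => a₀) (p i)) x}.ncard by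
    simpa using h univ
  intro s
  induction s using Finset.induction_on with
  | empty => simp
  | insert w s _ ih =>
    simpa [piecewise_insert] using ih.trans (ncard_avoidsPatterns_le_update T _ w a₀)

end Compression

section DominationNetwork

variable {V A : Type*} [Zero A] [One A]

open Classical in
noncomputable def dominationNetwork (G : V → V → Prop) (x : V → A) (v : V) : A :=
  if (∃ u, G u v) ∧ x v = 0 ∧ ∀ u, G u v → x u = 0 then 1 else x v

variable {G : V → V → Prop}

theorem dominationNetwork_apply_congr {x y : V → A} {i : V}
    (hxy : ∀ u, u = i ∨ G u i → x u = y u) :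
    dominationNetwork G x i = dominationNetwork G y i := by
  have hi : x i = y i := hxy i (Or.inl rfl)
  have hin : (∀ u, G u i → x u = 0) ↔ ∀ u, G u i → y u = 0 :=
    forall₂_congr fun u hu => by rw [hxy u (Or.inr hu)]
  unfold dominationNetwork
  congr 1
  rw [hi, hin]

theorem dominationNetwork_eq_self_iff [Fintype V] [DecidableEq A] (h10 : (1 : A) ≠ 0)
    (x : V → A) : dominationNetwork G x = x ↔ IsIDS G (supportFinset x) := by
  have hIDS : IsIDS G (supportFinset x) ↔
      ∀ v, ¬ ((∃ u, G u v) ∧ x v = 0 ∧ ∀ u, G u v → x u = 0) := by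
    simp [IsIDS, or_iff_not_imp_left, and_comm]
  rw [hIDS, funext_iff]
  refine forall_congr' fun v => ?_
  unfold dominationNetwork
  split_ifs with h
  · exact iff_of_false (by rw [h.2.1]; exact h10) (not_not.2 h)
  · simp [h]

theorem arcCF_dominationNetwork_iff [DecidableEq V] (hG : ∀ v, ¬ G v v) (h10 : (1 : A) ≠ 0)
    (u i : V) :
    arcCF (dominationNetwork G : (V → A) → V → A) u i ↔ (G u i ∨ u = i) := by
  constructor
  · intro ⟨x, a, hne⟩
    by_contra! h
    exact hne (dominationNetwork_apply_congr fun w hw => update_of_ne (by grind) _ _)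
  · rintro (hui | rfl)
    · refine ⟨0, 1, ?_⟩
      have hne : u ≠ i := by grind
      have h1 : dominationNetwork G (0 : V → A) i = 1 :=
        if_pos ⟨⟨u, hui⟩, rfl, fun _ _ => rfl⟩
      have h0 : dominationNetwork G (update (0 : V → A) u 1) i = 0 := by
        rw [dominationNetwork, if_neg fun h => h10 (by simpa using h.2.2 u hui)]
        exact update_of_ne hne.symm _ _
      rw [h1, h0]
      exact h10.symm
    · refine ⟨fun _ => 1, 0, ?_⟩
      have h0 : dominationNetwork G (update (fun _ => (1 : A)) u 0) u = 0 := by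
        rw [dominationNetwork, if_neg, update_self]
        rintro ⟨⟨w, hw⟩, _, hall⟩
        exact h10 (by simpa [update_of_ne (show w ≠ u by grind)] using hall w hw)
      have h1 : dominationNetwork G (fun _ => (1 : A)) u = 1 := if_neg fun h => h10 h.2.1
      rw [h0, h1]
      exact h10.symm

end DominationNetwork

section LoopedInteractionGraph

variable {V A : Type*} [Fintype V] [DecidableEq A] [Zero A] {G : V → V → Prop}

theorem avoidsPatterns_zero_iff_isIDS (x : V → A) :
    AvoidsPatterns (fun v : {v | ∃ u, G u v} => {u : V | u = v ∨ G u v}) (fun _ _ => (0 : A))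
      x ↔
      IsIDS G (supportFinset x) := by
  simp [AvoidsPatterns, IsIDS, or_and_right, exists_or, and_comm]

theorem ncard_fixedPoints_le_of_arcCF_iff [DecidableEq V] [Fintype A] (hG : ∀ v, ¬ G v v)
    {f : (V → A) → V → A} (hf : ∀ u i, arcCF f u i ↔ (G u i ∨ u = i)) :
    {x | f x = x}.ncard ≤ {x : V → A | IsIDS G (supportFinset x)}.ncard := by
  obtain ⟨p, hp⟩ := exists_fixed_avoidsPatterns f {v | ∃ u, G u v} fun v ⟨u, hu⟩ => by
    by_contra! h
    exact hG v (eq_of_arcCF_of_forall_apply_eq_self h ((hf u v).2 (Or.inl hu)) ▸ hu)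
  have hT : (fun v : {v | ∃ u, G u v} => insert (v : V) {u | arcCF f u v}) =
      fun v : {v | ∃ u, G u v} => {u : V | u = v ∨ G u v} := by
    ext v u
    simp [hf, or_comm]
  rw [hT] at hp
  calc {x | f x = x}.ncard ≤ {x | AvoidsPatterns _ p x}.ncard :=
        Set.ncard_le_ncard (fun x hx => hp x hx) (Set.toFinite _)
    _ ≤ {x | AvoidsPatterns _ (fun _ _ => 0) x}.ncard := ncard_avoidsPatterns_le_const _ p 0
    _ = _ := by simp_rw [avoidsPatterns_zero_iff_isIDS]

end LoopedInteractionGraph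

/-- Let `G` be a loopless digraph on `n` vertices and `G°` be `G` with a loop added
on every vertex.  For every `q ≥ 2`, the maximum number of fixed points over all
coding functions over an alphabet of size `q` with interaction graph exactly `G°`
equals `Σ_{k=0}^{n} (q−1)^k · I_k(G)`, where `I_k(G)` is the number of
in-dominating sets of `G` of size `k`; that is, `h(G°,q)` is the `log_q` of this sum. -/
theorem stmt14 {V : Type*} [Fintype V] [DecidableEq V] (G : V → V → Prop)
    (hG : ∀ v, ¬ G v v) (q : ℕ) (hq : 2 ≤ q) :
    sSup {n : ℕ | ∃ f : (V → Fin q) → V → Fin q,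
        (∀ u i, arcCF f u i ↔ (G u i ∨ u = i)) ∧ n = Set.ncard {x | f x = x}} =
      ∑ k ∈ Finset.range (Fintype.card V + 1),
        (q - 1) ^ k * Set.ncard {X : Finset V | IsIDS G X ∧ X.card = k} := by
  obtain ⟨k, rfl⟩ : ∃ k, q = k + 2 := ⟨q - 2, by omega⟩
  have h10 : (1 : Fin (k + 2)) ≠ 0 := one_ne_zero
  have hcount := ncard_setOf_isIDS_supportFinset (A := Fin (k + 2)) G
  rw [Fintype.card_fin] at hcount
  refine IsGreatest.csSup_eq
    ⟨⟨dominationNetwork G, arcCF_dominationNetwork_iff hG h10, ?_⟩, ?_⟩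
  · simp_rw [dominationNetwork_eq_self_iff h10, hcount]
  · rintro n ⟨f, hf, rfl⟩
    exact hcount ▸ ncard_fixedPoints_le_of_arcCF_iff hG hf
end

section
/- For the clique K_n (all arcs (i,j) with i ≠ j) with loops added on all vertices, the maximum number of fixed points of a coding function over an alphabet of size q whose interaction graph is exactly this graph equals q^n − 1. -/
section CodingFunction

variable {V A : Type*}

theorem ncard_setOf_apply_eq_self_lt [Finite V] [Finite A] {f : (V → A) → V → A}
    (hf : ∃ x, f x ≠ x) : {x | f x = x}.ncard < Nat.card (V → A) :=
  Set.ncard_lt_card fun h ↦ by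
    obtain ⟨x, hx⟩ := hf
    exact hx (h.symm ▸ Set.mem_univ x : x ∈ {x | f x = x})

theorem setOf_update_id_apply_eq_self [DecidableEq (V → A)] {c d : V → A} (hd : d ≠ c) :
    {x | Function.update id c d x = x} = {c}ᶜ := by
  ext x
  by_cases hx : x = c
  · simp [hx, hd]
  · simp [hx]

variable [DecidableEq V]

theorem exists_apply_ne_self_of_arcCF {f : (V → A) → V → A} {u i : V} (h : arcCF f u i)
    (hui : u ≠ i) : ∃ x, f x ≠ x := by
  obtain ⟨x, a, hx⟩ := h
  by_contra! hid
  rw [hid, hid, Function.update_of_ne hui.symm] at hx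
  exact hx rfl

theorem arcCF_update_id [Nontrivial V] [DecidableEq (V → A)] {c d : V → A}
    (hd : ∀ i, d i ≠ c i) (u i : V) : arcCF (Function.update id c d) u i := by
  by_cases hui : u = i
  · subst hui
    -- move `c` at a coordinate `j ≠ u` so that neither configuration compared is `c` itself
    obtain ⟨j, hj⟩ := exists_ne u
    have hx : Function.update c j (d j) ≠ c := fun h ↦ hd j (by simpa using congrFun h j)
    have hy : Function.update (Function.update c j (d j)) u (d u) ≠ c := fun h ↦
      hd j (by simpa [Function.update_of_ne hj] using congrFun h j)
    refine ⟨Function.update c j (d j), d u, ?_⟩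
    simpa [Function.update_of_ne hx, Function.update_of_ne hy, Function.update_of_ne hj.symm]
      using hd u
  · have hx : Function.update c u (d u) ≠ c := fun h ↦ hd u (by simpa using congrFun h u)
    refine ⟨c, d u, ?_⟩
    simpa [Function.update_of_ne hx, Function.update_of_ne (Ne.symm hui)] using (hd i).symm

end CodingFunction

theorem isGreatest_ncard_fixedPoints_of_forall_arcCF (V A : Type*) [DecidableEq V] [Finite V]
    [Nontrivial V] [Finite A] [Nontrivial A] :
    IsGreatest {m : ℕ | ∃ f : (V → A) → V → A,
        (∀ u i : V, arcCF f u i) ∧ m = Set.ncard {x | f x = x}} (Nat.card (V → A) - 1) := by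
  classical
  refine ⟨?_, ?_⟩
  · obtain ⟨a, b, hab⟩ := exists_pair_ne A
    have hd : ∀ _ : V, b ≠ a := fun _ ↦ hab.symm
    obtain ⟨i⟩ := (inferInstance : Nonempty V)
    refine ⟨Function.update id (fun _ ↦ a) (fun _ ↦ b), arcCF_update_id hd, ?_⟩
    rw [setOf_update_id_apply_eq_self (fun h ↦ hd i (congrFun h i)), Set.ncard_compl,
      Set.ncard_singleton]
  · rintro m ⟨f, hf, rfl⟩
    obtain ⟨u, i, hui⟩ := exists_pair_ne V
    have := ncard_setOf_apply_eq_self_lt (exists_apply_ne_self_of_arcCF (hf u i) hui)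
    omega

/-- For the clique `K_n` (`n ≥ 2`) with loops added on all vertices, the maximum
number of fixed points of a coding function over an alphabet of size `q ≥ 2` whose
interaction graph is exactly this graph (all arcs present) equals `q^n − 1`. -/
theorem stmt16 (n q : ℕ) (hn : 2 ≤ n) (hq : 2 ≤ q) :
    sSup {m : ℕ | ∃ f : (Fin n → Fin q) → Fin n → Fin q,
        (∀ u i : Fin n, arcCF f u i) ∧ m = Set.ncard {x | f x = x}} =
      q ^ n - 1 := by
  have : Nontrivial (Fin n) := Fin.nontrivial_iff_two_le.mpr hn
  have : Nontrivial (Fin q) := Fin.nontrivial_iff_two_le.mpr hq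
  simpa using (isGreatest_ncard_fixedPoints_of_forall_arcCF (Fin n) (Fin q)).csSup_eq
end

section
/- Let G be an undirected graph with independence number α(G) = 2 in which every maximum independent set (every non-adjacent pair of vertices) is weakly compatible. Then the vertex set of G can be partitioned into two cliques; equivalently, the complement of G is bipartite. -/
/-!
Pass to the complement `H = Gᶜ`, which is triangle-free because `α(G) = 2`.  Weak compatibility
of a non-edge `{x, y}` of `G` against a non-edge `{z, w}` says that on every path `x - y - z - w`
of `H` the vertex `x` is adjacent to `z` or to `w`; the first would close a triangle, so `x ~ w`.
Hence the endpoints of any walk of length three in `H` are adjacent, and by induction so are the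
endpoints of any walk of odd length.  An odd closed walk would then give a loop, so `H` is
bipartite, and its two colour classes are cliques of `G`.
-/

namespace SimpleGraph

variable {V : Type*} {H : SimpleGraph V}

theorem adj_of_adj_of_adj_of_adj (hK3 : H.CliqueFree 3)
    (hP : ∀ a b u v, H.Adj a b → H.Adj u v → u ≠ a → v ≠ a → v ≠ b →
      H.Adj b u → H.Adj a u ∨ H.Adj a v)
    {x y z w : V} (hxy : H.Adj x y) (hyz : H.Adj y z) (hzw : H.Adj z w) : H.Adj x w := by
  classical
  have hxz : ¬ H.Adj x z := fun hxz => hK3 _ (is3Clique_triple_iff.2 ⟨hxy, hxz, hyz⟩)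
  by_cases hzx : z = x
  · exact hzx ▸ hzw
  by_cases hwy : w = y
  · exact hwy ▸ hxy
  by_cases hwx : w = x
  · subst hwx
    exact (hK3 _ (is3Clique_triple_iff.2 ⟨hxy, hzw.symm, hyz⟩)).elim
  exact (hP x y z w hxy hzw hzx hwx hwy hyz).resolve_left hxz

theorem Walk.adj_of_odd_length (h : ∀ {x y z w}, H.Adj x y → H.Adj y z → H.Adj z w → H.Adj x w) :
    ∀ {u v : V} (p : H.Walk u v), Odd p.length → H.Adj u v
  | _, _, .nil, hp => absurd hp (by simp)
  | _, _, .cons huv .nil, _ => huv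
  | _, _, .cons hux (.cons hxy q), hp =>
    h hux hxy (q.adj_of_odd_length h (by simpa [Nat.odd_add_one] using hp))

theorem colorable_two_of_adj_of_adj_of_adj
    (h : ∀ {x y z w}, H.Adj x y → H.Adj y z → H.Adj z w → H.Adj x w) : H.Colorable 2 :=
  two_colorable_iff_forall_loop_even.2 fun _ p =>
    Nat.not_odd_iff_even.1 fun hp => (p.adj_of_odd_length h hp).ne rfl

theorem exists_isClique_isClique_compl_of_colorable_compl {G : SimpleGraph V}
    (h : Gᶜ.Colorable 2) : ∃ C : Set V, G.IsClique C ∧ G.IsClique Cᶜ := by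
  obtain ⟨c⟩ := h
  have hcompl : (c.colorClass 0)ᶜ = c.colorClass 1 := by
    ext v
    simp only [Set.mem_compl_iff, Coloring.colorClass, Set.mem_ofPred_eq]
    generalize c v = i
    fin_cases i <;> simp
  refine ⟨c.colorClass 0, ?_, ?_⟩
  · exact (isIndepSet_compl G).1 (c.isIndepSet_colorClass 0)
  · exact hcompl ▸ (isIndepSet_compl G).1 (c.isIndepSet_colorClass 1)

end SimpleGraph

open SimpleGraph

theorem stmt19_general {V : Type*} (G : SimpleGraph V)
    (h3 : ∀ a b c : V, a ≠ b → a ≠ c → b ≠ c →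
      ¬ G.Adj a b → ¬ G.Adj a c → ¬ G.Adj b c → False)
    (hwc : ∀ a b : V, a ≠ b → ¬ G.Adj a b →
      ∀ u v : V, u ≠ a → u ≠ b → v ≠ a → v ≠ b → u ≠ v →
        (G.Adj u v → (G.Adj a u ∧ G.Adj a v) ∨ (G.Adj b u ∧ G.Adj b v)) ∧
        (¬ G.Adj u v → ((G.Adj a u ∧ G.Adj a v) ↔ (G.Adj b u ∧ G.Adj b v)))) :
    ∃ C : Set V, G.IsClique C ∧ G.IsClique Cᶜ := by
  have hK3 : Gᶜ.CliqueFree 3 := by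
    classical
    intro s hs
    obtain ⟨a, b, c, hab, hac, hbc, -⟩ := is3Clique_iff.1 hs
    exact h3 a b c hab.ne hac.ne hbc.ne hab.2 hac.2 hbc.2
  have hP : ∀ a b u v, Gᶜ.Adj a b → Gᶜ.Adj u v → u ≠ a → v ≠ a → v ≠ b →
      Gᶜ.Adj b u → Gᶜ.Adj a u ∨ Gᶜ.Adj a v := by
    intro a b u v hab huv hua hva hvb hbu
    by_contra! hau_hav
    have hG : G.Adj a u ∧ G.Adj a v := by
      simpa [compl_adj, hua.symm, hva.symm] using hau_hav
    exact hbu.2 (((hwc a b hab.1 hab.2 u v hua hbu.1.symm hva hvb huv.1).2 huv.2).1 hG).1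
  exact exists_isClique_isClique_compl_of_colorable_compl
    (colorable_two_of_adj_of_adj_of_adj (adj_of_adj_of_adj_of_adj hK3 hP))

/-- Let `G` be an undirected graph with independence number `α(G) = 2` (there is a
non-adjacent pair of distinct vertices, and no independent set of size three), in
which every non-adjacent pair `{a,b}` (i.e. every maximum independent set) is weakly
compatible: for all distinct `u, v ∉ {a,b}`, if `uv` is an edge then `a` or `b` is
adjacent to both `u` and `v`, and if `uv` is a non-edge then the number of vertices
of `{a,b}` adjacent to both `u` and `v` is `0` or `2` (never exactly `1`).  Then the
vertex set of `G` can be partitioned into two cliques (equivalently, the complement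
of `G` is bipartite). -/
theorem stmt19 {V : Type*} [Fintype V] (G : SimpleGraph V)
    (h2 : ∃ a b : V, a ≠ b ∧ ¬ G.Adj a b)
    (h3 : ∀ a b c : V, a ≠ b → a ≠ c → b ≠ c →
      ¬ G.Adj a b → ¬ G.Adj a c → ¬ G.Adj b c → False)
    (hwc : ∀ a b : V, a ≠ b → ¬ G.Adj a b →
      ∀ u v : V, u ≠ a → u ≠ b → v ≠ a → v ≠ b → u ≠ v →
        (G.Adj u v → (G.Adj a u ∧ G.Adj a v) ∨ (G.Adj b u ∧ G.Adj b v)) ∧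
        (¬ G.Adj u v → ((G.Adj a u ∧ G.Adj a v) ↔ (G.Adj b u ∧ G.Adj b v)))) :
    ∃ C : Set V, G.IsClique C ∧ G.IsClique Cᶜ :=
  stmt19_general G h3 hwc
end
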